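/- arXiv:math/0607541 — 2 statements merged into one kernel-verified Lean document; each statement's English description precedes it below -/
import Mathlib

section
/- Let g : ℝ^N → ℝ be nonnegative, Lipschitz with Lipschitz constant L > 0, with mass ρ = ∫ g dv ∈ (0,∞) and energy e = ∫ g|v|² dv < ∞. Set R₀ = √(2e/ρ). Then there exist v̄ ∈ closed ball B(0,R₀), δ₀ = ρ/(4 Vol(B(0,R₀)) L) > 0 and η = ρ/(4 Vol(B(0,R₀))) > 0 such that g(v) ≥ η for all v ∈ B(v̄, δ₀). -/
/-!
By Chebyshev's inequality the mass outside the ball `B(0, R₀)` is at most `e / R₀² = ρ / 2`,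
so `g` has average at least `ρ / (2 Vol B)` on `B`, and some `v̄ ∈ B` attains at least this
average. A Lipschitz function can lose at most half of the value `ρ / (2 Vol B)` on the ball of
radius `ρ / (4 Vol B L)` around `v̄`.
-/

open MeasureTheory Real Metric NNReal

theorem LipschitzWith.half_le_of_mem_ball {E : Type*} [PseudoMetricSpace E] {f : E → ℝ}
    {K : ℝ≥0} (hf : LipschitzWith K f) (hK : 0 < K) {x y : E} {η : ℝ} (hx : 2 * η ≤ f x)
    (hy : y ∈ ball x (η / K)) : η ≤ f y := by
  have hdist : K * dist y x < η := (lt_div_iff₀' (by exact_mod_cast hK)).mp (mem_ball.mp hy)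
  have hdiff : f x - f y ≤ K * dist y x := by
    have h := hf.dist_le_mul x y
    rw [Real.dist_eq, dist_comm] at h
    exact (le_abs_self _).trans h
  linarith

section Moments

variable {E : Type*} [NormedAddCommGroup E] [MeasurableSpace E] [OpensMeasurableSpace E]
  {μ : Measure E} {g : E → ℝ}

theorem sq_mul_setIntegral_compl_closedBall_le (hg : ∀ v, 0 ≤ g v) (hint : Integrable g μ)
    (hint2 : Integrable (fun v => g v * ‖v‖ ^ 2) μ) {R : ℝ} (hR : 0 ≤ R) :
    R ^ 2 * ∫ v in (closedBall 0 R)ᶜ, g v ∂μ ≤ ∫ v, g v * ‖v‖ ^ 2 ∂μ := by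
  rw [← integral_const_mul]
  calc ∫ v in (closedBall 0 R)ᶜ, R ^ 2 * g v ∂μ
      ≤ ∫ v in (closedBall 0 R)ᶜ, g v * ‖v‖ ^ 2 ∂μ := by
        refine setIntegral_mono_on (hint.const_mul _).integrableOn hint2.integrableOn
          measurableSet_closedBall.compl fun v hv => ?_
        have hRv : R < ‖v‖ := by simpa using hv
        rw [mul_comm]
        gcongr
        exact hg v
    _ ≤ ∫ v, g v * ‖v‖ ^ 2 ∂μ :=
        setIntegral_le_integral hint2 (.of_forall fun v => mul_nonneg (hg v) (sq_nonneg _))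

theorem half_integral_le_setIntegral_closedBall (hg : ∀ v, 0 ≤ g v) (hint : Integrable g μ)
    (hint2 : Integrable (fun v => g v * ‖v‖ ^ 2) μ) {R : ℝ} (hR : 0 < R)
    (hmoment : 2 * ∫ v, g v * ‖v‖ ^ 2 ∂μ ≤ R ^ 2 * ∫ v, g v ∂μ) :
    (∫ v, g v ∂μ) / 2 ≤ ∫ v in closedBall 0 R, g v ∂μ := by
  have hsplit := integral_add_compl (μ := μ) (measurableSet_closedBall (x := 0) (ε := R)) hint
  have htail := sq_mul_setIntegral_compl_closedBall_le hg hint hint2 hR.le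
  have : ∫ v in (closedBall 0 R)ᶜ, g v ∂μ ≤ (∫ v, g v ∂μ) / 2 := by
    refine le_of_mul_le_mul_left ?_ (pow_pos hR 2)
    linarith
  linarith

omit [OpensMeasurableSpace E] in
theorem integral_mul_norm_sq_pos [NullSingletonClass μ] (hg : ∀ v, 0 ≤ g v)
    (hint2 : Integrable (fun v => g v * ‖v‖ ^ 2) μ) (hρ : 0 < ∫ v, g v ∂μ) :
    0 < ∫ v, g v * ‖v‖ ^ 2 ∂μ := by
  -- `{0}` is null, so `g * ‖·‖² = 0` a.e. would force `g = 0` a.e.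
  refine (integral_nonneg fun v => mul_nonneg (hg v) (sq_nonneg _)).lt_of_ne' fun h => ?_
  have hzero := (integral_eq_zero_iff_of_nonneg (fun v => mul_nonneg (hg v) (sq_nonneg _))
    hint2).mp h
  have : g =ᵐ[μ] 0 := by
    filter_upwards [hzero, μ.ae_ne 0] with v hv hv0
    simpa [hv0] using hv
  exact hρ.ne' (by simp [integral_congr_ae this])

theorem exists_mem_closedBall_half_integral_div_le [ProperSpace E]
    [IsFiniteMeasureOnCompacts μ] [μ.IsOpenPosMeasure] (hg : ∀ v, 0 ≤ g v)
    (hint : Integrable g μ) (hint2 : Integrable (fun v => g v * ‖v‖ ^ 2) μ) {R : ℝ} (hR : 0 < R)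
    (hmoment : 2 * ∫ v, g v * ‖v‖ ^ 2 ∂μ ≤ R ^ 2 * ∫ v, g v ∂μ) :
    ∃ v ∈ closedBall 0 R, (∫ v, g v ∂μ) / (2 * μ.real (closedBall 0 R)) ≤ g v := by
  obtain ⟨v, hv, hle⟩ := exists_setAverage_le (measure_closedBall_pos μ 0 hR).ne'
    measure_closedBall_lt_top.ne hint.integrableOn
  refine ⟨v, hv, le_trans ?_ hle⟩
  rw [setAverage_eq, smul_eq_mul, inv_mul_eq_div, ← div_div]
  exact div_le_div_of_nonneg_right (half_integral_le_setIntegral_closedBall hg hint hint2 hR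
    hmoment) measureReal_nonneg

end Moments

/-- "Upheaval point": a nonnegative Lipschitz density with positive mass and finite energy
is bounded below by `η = ρ/(4 Vol(B(0,R₀)))` on a ball `B(v̄, δ₀)` with
`v̄ ∈ B(0,R₀)`, `R₀ = √(2e/ρ)` and `δ₀ = ρ/(4 Vol(B(0,R₀)) L)`. -/
theorem upheaval_point (N : ℕ) (hN : 1 ≤ N) (g : EuclideanSpace ℝ (Fin N) → ℝ)
    (L : ℝ) (hL : 0 < L) (hg : ∀ v, 0 ≤ g v)
    (hLip : LipschitzWith (Real.toNNReal L) g)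
    (hint : Integrable g) (hint2 : Integrable (fun v => g v * ‖v‖ ^ 2))
    (hρ : 0 < ∫ v, g v) :
    ∃ vbar ∈ Metric.closedBall (0 : EuclideanSpace ℝ (Fin N))
        (Real.sqrt (2 * (∫ v, g v * ‖v‖ ^ 2) / (∫ v, g v))),
      ∀ v ∈ Metric.ball vbar
          ((∫ v, g v) /
            (4 * (volume (Metric.closedBall (0 : EuclideanSpace ℝ (Fin N))
              (Real.sqrt (2 * (∫ v, g v * ‖v‖ ^ 2) / (∫ v, g v))))).toReal * L)),
        (∫ v, g v) /
          (4 * (volume (Metric.closedBall (0 : EuclideanSpace ℝ (Fin N))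
            (Real.sqrt (2 * (∫ v, g v * ‖v‖ ^ 2) / (∫ v, g v))))).toReal) ≤ g v := by
  have : Nonempty (Fin N) := ⟨⟨0, hN⟩⟩
  set ρ := ∫ v, g v
  set e := ∫ v, g v * ‖v‖ ^ 2
  have he : 0 < e := integral_mul_norm_sq_pos hg hint2 hρ
  have hR₀ : 0 < √(2 * e / ρ) := sqrt_pos.2 (by positivity)
  have hmoment : 2 * e ≤ √(2 * e / ρ) ^ 2 * ρ := by
    rw [sq_sqrt (by positivity), div_mul_cancel₀ _ hρ.ne']
  obtain ⟨vbar, hvbar, hle⟩ :=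
    exists_mem_closedBall_half_integral_div_le hg hint hint2 hR₀ hmoment
  refine ⟨vbar, hvbar, fun v hv => hLip.half_le_of_mem_ball (x := vbar) (toNNReal_pos.2 hL) ?_ ?_⟩
  · rw [measureReal_def] at hle
    convert hle using 1
    ring
  · rwa [coe_toNNReal _ hL.le, div_div]
end

section
/- Let κ > 2 + 2ν/(2−ν) for some ν ∈ (0,2), choose β with 2ν/(2−ν) < β < κ − 2, and let α ∈ (0,1). Suppose a sequence (a_n) satisfies a₀ ≥ α and a_{n+1} ≥ C · C_e · α^{βκ^n} · a_n² · μ^n for all n, where C, C_e > 0 and μ > 0 are constants. Then, provided α is small enough (depending on C, C_e, μ, β, κ), one has a_n ≥ α^{κ^n} for all n ≥ 0. -/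
open Real

/-!
Write `κ = 2 + β + δ` with `δ > 0`. Then `α ^ κ ^ (n + 1) = α ^ (δ κ ^ n) · α ^ (β κ ^ n) · (α ^ κ ^ n) ^ 2`,
so the induction step only needs the surplus factor `α ^ (δ κ ^ n)` to be at most `C C_e μ ^ n`.
Since `κ ^ n ≥ n + 1`, this surplus is at most `(α ^ δ) ^ (n + 1)`, which beats `C C_e μ ^ n` once
`α ^ δ ≤ min 1 (min (C C_e) μ)`.
-/

lemma natCast_add_one_le_pow {κ : ℝ} (hκ : 2 ≤ κ) (n : ℕ) : (n : ℝ) + 1 ≤ κ ^ n :=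
  calc (n : ℝ) + 1 ≤ 2 ^ n := by exact_mod_cast Nat.lt_two_pow_self
    _ ≤ κ ^ n := pow_le_pow_left₀ zero_le_two hκ n

lemma rpow_pow_le_pow_succ {q κ : ℝ} (hq₀ : 0 < q) (hq₁ : q ≤ 1) (hκ : 2 ≤ κ) (n : ℕ) :
    q ^ κ ^ n ≤ q ^ (n + 1) := by
  rw [← rpow_natCast q (n + 1)]
  exact rpow_le_rpow_of_exponent_ge hq₀ hq₁ (by exact_mod_cast natCast_add_one_le_pow hκ n)

lemma exists_pos_forall_rpow_mul_pow_le {κ δ c μ : ℝ} (hκ : 2 ≤ κ) (hδ : 0 < δ) (hc : 0 < c)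
    (hμ : 0 < μ) :
    ∃ α₀ > 0, ∀ α : ℝ, 0 < α → α ≤ α₀ → ∀ n : ℕ, α ^ (δ * κ ^ n) ≤ c * μ ^ n := by
  set m := min 1 (min c μ)
  have hm₀ : 0 < m := lt_min one_pos (lt_min hc hμ)
  refine ⟨m ^ δ⁻¹, rpow_pos_of_pos hm₀ _, fun α hα hαm n => ?_⟩
  have hαδ : α ^ δ ≤ m := (le_rpow_inv_iff_of_pos hα.le hm₀.le hδ).1 hαm
  calc α ^ (δ * κ ^ n) = (α ^ δ) ^ κ ^ n := rpow_mul hα.le _ _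
    _ ≤ (α ^ δ) ^ (n + 1) :=
      rpow_pow_le_pow_succ (rpow_pos_of_pos hα _) (hαδ.trans (min_le_left _ _)) hκ n
    _ ≤ m ^ (n + 1) := pow_le_pow_left₀ (rpow_nonneg hα.le _) hαδ _
    _ = m * m ^ n := pow_succ' m n
    _ ≤ c * μ ^ n := mul_le_mul (min_le_of_right_le (min_le_left _ _))
      (pow_le_pow_left₀ hm₀.le (min_le_of_right_le (min_le_right _ _)) n) (by positivity) hc.le

lemma rpow_pow_succ_eq {α : ℝ} (hα : 0 < α) (κ β : ℝ) (n : ℕ) :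
    α ^ κ ^ (n + 1) = α ^ ((κ - 2 - β) * κ ^ n) * α ^ (β * κ ^ n) * (α ^ κ ^ n) ^ 2 := by
  rw [← rpow_natCast (α ^ κ ^ n) 2, ← rpow_mul hα.le, ← rpow_add hα, ← rpow_add hα, pow_succ]
  congr 1
  push_cast
  ring

lemma rpow_pow_succ_le {α κ β c μ x : ℝ} {n : ℕ} (hα : 0 < α)
    (hsurplus : α ^ ((κ - 2 - β) * κ ^ n) ≤ c * μ ^ n) (hx : α ^ κ ^ n ≤ x) :
    α ^ κ ^ (n + 1) ≤ c * α ^ (β * κ ^ n) * x ^ 2 * μ ^ n := by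
  have hcμ : 0 ≤ c * μ ^ n := (rpow_nonneg hα.le _).trans hsurplus
  calc α ^ κ ^ (n + 1)
      = α ^ ((κ - 2 - β) * κ ^ n) * (α ^ (β * κ ^ n) * (α ^ κ ^ n) ^ 2) := by
        rw [rpow_pow_succ_eq hα, mul_assoc]
    _ ≤ c * μ ^ n * (α ^ (β * κ ^ n) * x ^ 2) := by
        gcongr
    _ = c * α ^ (β * κ ^ n) * x ^ 2 * μ ^ n := by ring

theorem noncutoff_induction_general (ν κ β C Ce μ : ℝ) (hν : ν ∈ Set.Ioo (0 : ℝ) 2)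
    (hκ : 2 + 2 * ν / (2 - ν) < κ) (hβ2 : β < κ - 2)
    (hC : 0 < C) (hCe : 0 < Ce) (hμ : 0 < μ) :
    ∃ α₀ : ℝ, 0 < α₀ ∧ ∀ α : ℝ, 0 < α → α ≤ α₀ → α < 1 →
      ∀ a : ℕ → ℝ, α ≤ a 0 →
        (∀ n : ℕ, C * Ce * α ^ (β * κ ^ n) * a n ^ 2 * μ ^ n ≤ a (n + 1)) →
        ∀ n : ℕ, α ^ (κ ^ n) ≤ a n := by
  obtain ⟨hν₀, hν₂⟩ := hν
  have hκ₂ : 2 ≤ κ := by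
    have : 0 < 2 * ν / (2 - ν) := div_pos (by linarith) (by linarith)
    linarith
  obtain ⟨α₀, hα₀, hsurplus⟩ :=
    exists_pos_forall_rpow_mul_pow_le hκ₂ (by linarith : 0 < κ - 2 - β)
      (mul_pos hC hCe) hμ
  refine ⟨α₀, hα₀, fun α hα hαα₀ _ a ha₀ hrec n => ?_⟩
  induction n with
  | zero => simpa using ha₀
  | succ n ih => exact (rpow_pow_succ_le hα (hsurplus α hα hαα₀ n) ih).trans (hrec n)

/-- Non-cutoff induction: for `κ > 2 + 2ν/(2−ν)`, `2ν/(2−ν) < β < κ−2`, and positive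
constants `C`, `C_e`, `μ`, there is `α₀ > 0` such that for every `α ∈ (0, α₀] ∩ (0,1)`
and every sequence with `a₀ ≥ α` and `a_{n+1} ≥ C C_e α^{βκ^n} a_n² μ^n`, one has
`a_n ≥ α^{κ^n}` for all `n`. -/
theorem noncutoff_induction (ν κ β C Ce μ : ℝ) (hν : ν ∈ Set.Ioo (0 : ℝ) 2)
    (hκ : 2 + 2 * ν / (2 - ν) < κ) (hβ1 : 2 * ν / (2 - ν) < β) (hβ2 : β < κ - 2)
    (hC : 0 < C) (hCe : 0 < Ce) (hμ : 0 < μ) :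
    ∃ α₀ : ℝ, 0 < α₀ ∧ ∀ α : ℝ, 0 < α → α ≤ α₀ → α < 1 →
      ∀ a : ℕ → ℝ, α ≤ a 0 →
        (∀ n : ℕ, C * Ce * α ^ (β * κ ^ n) * a n ^ 2 * μ ^ n ≤ a (n + 1)) →
        ∀ n : ℕ, α ^ (κ ^ n) ≤ a n :=
  noncutoff_induction_general ν κ β C Ce μ hν hκ hβ2 hC hCe hμ
end
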